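/- arXiv:0704.0417 — 2 statements merged into one kernel-verified Lean document; each statement's English description precedes it below -/
import Mathlib

section
/- ∑_{m ∈ ℤ} μ m * W m = (2 - √5) * ∫_ℝ (f y)² dy. (The sum has only finitely many nonzero terms since W vanishes outside (-3, 3).) In particular, if f is not identically zero, this sum is negative. -/
open Finset

/-- The potential `V` on `ℤ`: `V 0 = V 2 = V (-2) = 1`, `V 1 = V (-1) = -1`,
and `V n = 0` for `|n| ≥ 3`. -/
def V : ℤ → ℝ := fun n =>
  if n = 0 ∨ n = 2 ∨ n = -2 then 1
  else if n = 1 ∨ n = -1 then -1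
  else 0

/-- The 5-periodic function `μ` on `ℤ`: `μ n = 1` if `n ≡ 0 [ZMOD 5]`,
`μ n = (√5 - 1)/2` if `n ≡ ±1 [ZMOD 5]`, and `μ n = 0` if `n ≡ ±2 [ZMOD 5]`. -/
noncomputable def μ : ℤ → ℝ := fun n =>
  if (n : ZMod 5) = 0 then 1
  else if (n : ZMod 5) = 1 ∨ (n : ZMod 5) = -1 then (Real.sqrt 5 - 1) / 2
  else 0

/-!
Since `f` lives in an interval of length one, its autocorrelation `∫ f (k + y) f y dy` vanishes at
every nonzero integer `k`. Hence `W m = V m * ‖f‖₂²` at integers `m`, and the sum collapses to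
`(∑ μ m V m) ‖f‖₂² = (1 - 2γ) ‖f‖₂² = (2 - √5) ‖f‖₂²`, which is negative as soon as `f ≠ 0`.
-/

open MeasureTheory Function

theorem mul_comp_add_eq_zero_of_support_subset_Ioo {f : ℝ → ℝ} {r t : ℝ}
    (hf : support f ⊆ Set.Ioo (-r) r) (ht : 2 * r ≤ |t|) (y : ℝ) : f (t + y) * f y = 0 := by
  by_contra h
  obtain ⟨hty, hy⟩ := mul_ne_zero_iff.mp h
  obtain ⟨h₁, h₂⟩ := hf hty
  obtain ⟨h₃, h₄⟩ := hf hy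
  cases abs_cases t <;> linarith

theorem integral_mul_comp_intCast_sub_add {f : ℝ → ℝ}
    (hf : support f ⊆ Set.Ioo (-(1 / 2)) (1 / 2)) (n m : ℤ) :
    ∫ y, f (n - m + y) * f y = if n = m then ∫ y, f y ^ 2 else 0 := by
  split_ifs with h
  · simp [h, sq]
  · have : (1 : ℝ) ≤ |(n : ℝ) - m| := by
      rw [← Int.cast_sub, ← Int.cast_abs, ← Int.cast_one, Int.cast_le]
      exact Int.one_le_abs (sub_ne_zero.mpr h)
    simp only [mul_comp_add_eq_zero_of_support_subset_Ioo (t := n - m) hf (by linarith),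
      integral_zero]

theorem finsum_V_mul_integral_mul_comp_intCast_sub_add {f : ℝ → ℝ}
    (hf : support f ⊆ Set.Ioo (-(1 / 2)) (1 / 2)) (m : ℤ) :
    ∑ᶠ n : ℤ, V n * ∫ y, f (n - m + y) * f y = V m * ∫ y, f y ^ 2 := by
  simp only [integral_mul_comp_intCast_sub_add hf, mul_ite, mul_zero]
  rw [finsum_eq_single _ m fun n hn => if_neg hn, if_pos rfl]

theorem support_V_subset : support V ⊆ Set.Icc (-2) 2 := by
  intro n hn
  by_contra h
  rw [Set.mem_Icc] at h
  exact hn (by simp only [V]; rw [if_neg (by omega), if_neg (by omega)])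

theorem finsum_μ_mul_V : ∑ᶠ m : ℤ, μ m * V m = 2 - Real.sqrt 5 := by
  have hs : support (fun m => μ m * V m) ⊆ ↑({-2, -1, 0, 1, 2} : Finset ℤ) := by
    refine (support_mul_subset_right _ _).trans (support_V_subset.trans fun n hn => ?_)
    rw [Set.mem_Icc] at hn
    simp only [Finset.coe_insert, Finset.coe_singleton, Set.mem_insert_iff,
      Set.mem_singleton_iff]
    omega
  rw [finsum_eq_sum_of_support_subset _ hs]
  simp +decide [μ, V]
  ring

theorem integral_sq_pos_of_ne_zero {X : Type*} [TopologicalSpace X] [MeasurableSpace X]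
    [OpensMeasurableSpace X] {ν : Measure X} [ν.IsOpenPosMeasure] [IsFiniteMeasureOnCompacts ν]
    {f : X → ℝ} (hf : Continuous f) (hcs : HasCompactSupport f) (hne : f ≠ 0) :
    0 < ∫ x, f x ^ 2 ∂ν := by
  obtain ⟨x, hx⟩ := Function.ne_iff.mp hne
  exact integral_pos_of_integrable_nonneg_nonzero (hf.pow 2)
    ((hf.pow 2).integrable_of_hasCompactSupport (by simpa only [sq] using hcs.mul_left))
    (fun x => sq_nonneg (f x)) (pow_ne_zero 2 hx)

theorem sum_mu_mul_W_general (f : ℝ → ℝ) (hf_cont : Continuous f)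
    (hf_supp : Function.support f ⊆ Set.Ioo (-(1/2) : ℝ) (1/2))
    (W : ℝ → ℝ)
    (hW : W = fun x => ∑ᶠ n : ℤ, V n * ∫ y : ℝ, f (n - x + y) * f y) :
    (∑ᶠ m : ℤ, μ m * W m) = (2 - Real.sqrt 5) * ∫ y : ℝ, (f y) ^ 2 ∧
    (f ≠ 0 → (∑ᶠ m : ℤ, μ m * W m) < 0) := by
  subst hW
  have hsum : ∑ᶠ m : ℤ, μ m * ∑ᶠ n : ℤ, V n * ∫ y, f (n - m + y) * f y =
      (2 - Real.sqrt 5) * ∫ y, f y ^ 2 := by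
    simp only [finsum_V_mul_integral_mul_comp_intCast_sub_add hf_supp, ← mul_assoc, ← finsum_mul,
      finsum_μ_mul_V]
  refine ⟨hsum, fun hne => hsum ▸ mul_neg_of_neg_of_pos ?_ ?_⟩
  · linarith [(Real.lt_sqrt zero_le_two).mpr (by norm_num : (2 : ℝ) ^ 2 < 5)]
  · exact integral_sq_pos_of_ne_zero hf_cont
      (.of_support_subset_isCompact isCompact_Icc (hf_supp.trans Set.Ioo_subset_Icc_self)) hne

theorem sum_mu_mul_W (f : ℝ → ℝ) (hf_cont : Continuous f) (hf_pos : ∀ x, 0 ≤ f x)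
    (hf_supp : Function.support f ⊆ Set.Ioo (-(1/2) : ℝ) (1/2))
    (W : ℝ → ℝ)
    (hW : W = fun x => ∑ᶠ n : ℤ, V n * ∫ y : ℝ, f (n - x + y) * f y) :
    (∑ᶠ m : ℤ, μ m * W m) = (2 - Real.sqrt 5) * ∫ y : ℝ, (f y) ^ 2 ∧
    (f ≠ 0 → (∑ᶠ m : ℤ, μ m * W m) < 0) :=
  sum_mu_mul_W_general f hf_cont hf_supp W hW
end

section
/- For t ∈ ℝ with -1 ≤ t < -(√5 + 1)/4, define V_t : ℤ → ℝ by V_t 0 = V_t 2 = V_t (-2) = 1, V_t 1 = V_t (-1) = t, and V_t n = 0 whenever |n| ≥ 3. Then V_t is stable, but V_t is not the sum of a nonnegative function and a positive definite function: there do not exist f, g : ℤ → ℝ with f n ≥ 0 for all n, g positive definite, and V_t = f + g. -/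
open Finset
open scoped ComplexOrder

/-- A pair potential `V : ℤ → ℝ` is stable if every nonnegative finitely supported
density has nonnegative energy. -/
def IsStable (V : ℤ → ℝ) : Prop :=
  ∀ ρ : ℤ → ℝ, (Function.support ρ).Finite → (∀ n, 0 ≤ ρ n) →
    0 ≤ ∑ᶠ m, ∑ᶠ n, ρ m * V (m - n) * ρ n

/-- A real-valued function on an additive abelian group is positive definite if all its
"quadratic forms" with complex coefficients are real and nonnegative. -/
def IsPosDef {G : Type*} [AddCommGroup G] (g : G → ℝ) : Prop :=
  ∀ (N : ℕ) (x : Fin N → G) (c : Fin N → ℂ),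
    0 ≤ ∑ i, ∑ j, c i * (starRingEnd ℂ) (c j) * (g (x i - x j) : ℂ)
/-!
Stability. For `ρ ≥ 0` the energy of `V_t` is `C 0 + 2 t C 1 + 2 C 2`, where
`C d = ∑ₘ ρ m ρ (m - d)` is the autocorrelation of `ρ`. As `C 1 ≥ 0` it suffices to take
`t = -1`, and then `C 0 - 2 C 1 + 2 C 2 = ∑ₘ ρ m (ρ m - 2 ρ (m - 1) + 2 ρ (m - 2)) ≥ 0` because each
summand dominates the increment `L m - L (m - 1)` of the finitely supported quantity
`L m = max (ρ m - ρ (m - 1)) 0 ^ 2`, and these increments telescope to `0`.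

Non-decomposability. The weight `w d = 1 + √5 + 4 cos (2π d / 5)` is a nonnegative combination of
the characters `1` and `cos (2π d / 5)`, it is pointwise nonnegative, and it vanishes at `d = ±2`.
If `V_t = f + g` with `f ≥ 0` and `g` positive definite, then for every `N`
`0 ≤ ∑_{i,j ≤ N} w (i - j) g (i - j) ≤ ∑_{i,j ≤ N} w (i - j) V_t (i - j) = (N + 1)(5 + √5) + 4√5 t N`,
which is negative for large `N` exactly when `t < -(√5 + 1) / 4`.
-/

open Function Real

noncomputable def autocorr (ρ : ℤ → ℝ) (d : ℤ) : ℝ := ∑ᶠ m, ρ m * ρ (m - d)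

theorem autocorr_neg (ρ : ℤ → ℝ) (d : ℤ) : autocorr ρ (-d) = autocorr ρ d := by
  rw [autocorr, ← finsum_comp_equiv (Equiv.subRight d)]
  simp [autocorr, mul_comm]

theorem autocorr_nonneg {ρ : ℤ → ℝ} (hρ : ∀ n, 0 ≤ ρ n) (d : ℤ) : 0 ≤ autocorr ρ d :=
  finsum_nonneg fun m => mul_nonneg (hρ m) (hρ (m - d))

theorem energy_eq_sum_autocorr {V : ℤ → ℝ} {D : Finset ℤ} (hV : support V ⊆ D)
    {ρ : ℤ → ℝ} (hρ : ρ.HasFiniteSupport) :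
    ∑ᶠ m, ∑ᶠ n, ρ m * V (m - n) * ρ n = ∑ d ∈ D, V d * autocorr ρ d := by
  have inner (m : ℤ) : ∑ᶠ n, ρ m * V (m - n) * ρ n = ∑ d ∈ D, V d * (ρ m * ρ (m - d)) := by
    rw [← finsum_comp_equiv (Equiv.subLeft m)]
    simp only [Equiv.subLeft_apply, sub_sub_cancel]
    rw [finsum_eq_sum_of_support_subset]
    · exact sum_congr rfl fun d _ => by ring
    · exact (support_mul_subset_left _ _).trans ((support_mul_subset_right _ _).trans hV)
  rw [finsum_congr inner, finsum_sum_comm]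
  · simp only [autocorr, mul_finsum]
  · exact fun d _ => by fun_prop

theorem sq_max_sub_sub_sq_max_sub_le {a b c : ℝ} (ha : 0 ≤ a) (hb : 0 ≤ b) (hc : 0 ≤ c) :
    max (c - b) 0 ^ 2 - max (b - a) 0 ^ 2 ≤ c * c - 2 * (c * b) + 2 * (c * a) := by
  rcases le_total c b with hcb | hbc <;> rcases le_total b a with hba | hab
  · rw [max_eq_right (by linarith), max_eq_right (by linarith)]
    nlinarith [mul_nonneg hc (sub_nonneg.2 hba)]
  · rw [max_eq_right (by linarith), max_eq_left (by linarith)]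
    nlinarith [sq_nonneg (b - a - c)]
  · rw [max_eq_left (by linarith), max_eq_right (by linarith)]
    nlinarith [mul_nonneg (sub_nonneg.2 hbc) (sub_nonneg.2 hba), mul_nonneg hb (sub_nonneg.2 hba)]
  · rw [max_eq_left (by linarith), max_eq_left (by linarith)]
    nlinarith [mul_nonneg ha (sub_nonneg.2 hbc)]

theorem two_mul_autocorr_one_le {ρ : ℤ → ℝ} (hρ : ρ.HasFiniteSupport) (h0 : ∀ n, 0 ≤ ρ n) :
    2 * autocorr ρ 1 ≤ autocorr ρ 0 + 2 * autocorr ρ 2 := by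
  set L : ℤ → ℝ := fun m => max (ρ m - ρ (m - 1)) 0 ^ 2
  have hL : L.HasFiniteSupport := hρ.subset <| support_subset_iff'.2 fun m hm => by
    simp [L, notMem_support.1 hm, h0 (m - 1)]
  have hL' : (fun m => L (m - 1)).HasFiniteSupport :=
    hL.fun_comp_of_injective (sub_left_injective (b := 1))
  have telescope : ∑ᶠ m, (L m - L (m - 1)) = 0 := by
    rw [finsum_sub_distrib hL hL', sub_eq_zero]
    exact (finsum_comp_equiv (Equiv.subRight 1)).symm
  have expand : ∑ᶠ m, (ρ m * ρ (m - 0) - 2 * (ρ m * ρ (m - 1)) + 2 * (ρ m * ρ (m - 2))) =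
      autocorr ρ 0 - 2 * autocorr ρ 1 + 2 * autocorr ρ 2 := by
    rw [finsum_add_distrib, finsum_sub_distrib, ← mul_finsum, ← mul_finsum] <;>
      first | rfl | fun_prop
  have increments := finsum_le_finsum' (f := fun m => L m - L (m - 1))
    (g := fun m => ρ m * ρ (m - 0) - 2 * (ρ m * ρ (m - 1)) + 2 * (ρ m * ρ (m - 2)))
    (hL.sub hL') (by fun_prop) fun m => by
      simpa [L, sub_sub, one_add_one_eq_two] using
        sq_max_sub_sub_sq_max_sub_le (h0 (m - 2)) (h0 (m - 1)) (h0 m)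
  linarith

def pairPotential (t : ℝ) (n : ℤ) : ℝ :=
  if n = 0 ∨ n = 2 ∨ n = -2 then 1 else if n = 1 ∨ n = -1 then t else 0

theorem support_pairPotential_subset (t : ℝ) :
    support (pairPotential t) ⊆ ({-2, -1, 0, 1, 2} : Finset ℤ) := by
  intro n hn
  simp only [mem_support, pairPotential] at hn
  simp only [coe_insert, coe_singleton, Set.mem_insert_iff, Set.mem_singleton_iff]
  split_ifs at hn <;> first | omega | simp at hn

theorem energy_pairPotential (t : ℝ) {ρ : ℤ → ℝ} (hρ : ρ.HasFiniteSupport) :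
    ∑ᶠ m, ∑ᶠ n, ρ m * pairPotential t (m - n) * ρ n =
      autocorr ρ 0 + 2 * t * autocorr ρ 1 + 2 * autocorr ρ 2 := by
  rw [energy_eq_sum_autocorr (support_pairPotential_subset t) hρ]
  simp [pairPotential, autocorr_neg]
  ring

theorem pairPotential_stable {t : ℝ} (ht : -1 ≤ t) : IsStable (pairPotential t) := by
  intro ρ hρ h0
  rw [energy_pairPotential t hρ]
  nlinarith [two_mul_autocorr_one_le hρ h0, autocorr_nonneg h0 1]

theorem IsPosDef.sum_range_mul_mul_nonneg {g : ℤ → ℝ} (hg : IsPosDef g) (N : ℕ) (c : ℕ → ℝ) :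
    0 ≤ ∑ i ∈ range N, ∑ j ∈ range N, c i * c j * g (i - j) := by
  have h := hg N (fun i => (i : ℤ)) (fun i => (c i : ℂ))
  simp only [Complex.conj_ofReal] at h
  simp only [← Fin.sum_univ_eq_sum_range]
  exact_mod_cast h

theorem IsPosDef.sum_range_cos_mul_nonneg {g : ℤ → ℝ} (hg : IsPosDef g) (N : ℕ) (θ : ℝ) :
    0 ≤ ∑ i ∈ range N, ∑ j ∈ range N, cos (((i - j : ℤ) : ℝ) * θ) * g (i - j) := by
  have hcos (i j : ℕ) : cos (((i - j : ℤ) : ℝ) * θ) =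
      cos (i * θ) * cos (j * θ) + sin (i * θ) * sin (j * θ) := by
    push_cast
    rw [sub_mul, cos_sub]
  simp only [hcos, add_mul, sum_add_distrib]
  exact add_nonneg (hg.sum_range_mul_mul_nonneg N _) (hg.sum_range_mul_mul_nonneg N _)

theorem IsPosDef.sum_range_add_cos_mul_nonneg {g : ℤ → ℝ} (hg : IsPosDef g) (N : ℕ) {a b : ℝ}
    (ha : 0 ≤ a) (hb : 0 ≤ b) (θ : ℝ) :
    0 ≤ ∑ i ∈ range N, ∑ j ∈ range N, (a + b * cos (((i - j : ℤ) : ℝ) * θ)) * g (i - j) := by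
  have hconst := hg.sum_range_mul_mul_nonneg N fun _ => 1
  simp only [one_mul] at hconst
  simp only [add_mul, sum_add_distrib, mul_assoc, ← mul_sum]
  exact add_nonneg (mul_nonneg ha hconst) (mul_nonneg hb (hg.sum_range_cos_mul_nonneg N θ))

theorem cos_two_pi_div_five : cos (2 * π / 5) = (√5 - 1) / 4 := by
  have h5 : √5 ^ 2 = 5 := sq_sqrt (by norm_num)
  rw [show 2 * π / 5 = 2 * (π / 5) by ring, cos_two_mul, cos_pi_div_five]
  linear_combination h5 / 8

theorem cos_four_pi_div_five : cos (4 * π / 5) = -(1 + √5) / 4 := by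
  rw [show 4 * π / 5 = π - π / 5 by ring, cos_pi_sub, cos_pi_div_five]
  ring

noncomputable def pentagonWeight (d : ℤ) : ℝ := 1 + √5 + 4 * cos (d * (2 * π / 5))

theorem pentagonWeight_neg (d : ℤ) : pentagonWeight (-d) = pentagonWeight d := by
  simp [pentagonWeight, neg_mul, cos_neg]

theorem pentagonWeight_add_five_mul (d q : ℤ) :
    pentagonWeight (d + 5 * q) = pentagonWeight d := by
  rw [pentagonWeight, pentagonWeight, ← cos_add_int_mul_two_pi (d * (2 * π / 5)) q]
  push_cast
  ring_nf

theorem pentagonWeight_zero : pentagonWeight 0 = 5 + √5 := by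
  norm_num [pentagonWeight]
  ring

theorem pentagonWeight_one : pentagonWeight 1 = 2 * √5 := by
  rw [pentagonWeight, Int.cast_one, one_mul, cos_two_pi_div_five]
  ring

theorem pentagonWeight_two : pentagonWeight 2 = 0 := by
  rw [pentagonWeight, Int.cast_two, show 2 * (2 * π / 5) = 4 * π / 5 by ring,
    cos_four_pi_div_five]
  ring

theorem pentagonWeight_nonneg (d : ℤ) : 0 ≤ pentagonWeight d := by
  obtain ⟨r, q, hr₁, hr₂, rfl⟩ : ∃ r q : ℤ, -2 ≤ r ∧ r ≤ 2 ∧ d = r + 5 * q :=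
    ⟨(d + 2) % 5 - 2, (d + 2) / 5, by omega, by omega, by omega⟩
  rw [pentagonWeight_add_five_mul]
  have := sqrt_nonneg 5
  interval_cases r <;>
    simp only [pentagonWeight_neg, pentagonWeight_zero, pentagonWeight_one, pentagonWeight_two] <;>
    linarith

theorem pentagonWeight_mul_pairPotential_eq_zero (t : ℝ) {d : ℤ} (hd : 1 < |d|) :
    pentagonWeight d * pairPotential t d = 0 := by
  rw [lt_abs] at hd
  by_cases h2 : d = 2 ∨ d = -2
  · rcases h2 with rfl | rfl <;> simp [pentagonWeight_neg, pentagonWeight_two]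
  · rw [pairPotential, if_neg (by omega), if_neg (by omega), mul_zero]

theorem sum_range_succ_sum_range_succ {M : Type*} [AddCommMonoid M] (A : ℕ → ℕ → M) (n : ℕ) :
    ∑ i ∈ range (n + 1), ∑ j ∈ range (n + 1), A i j =
      ∑ i ∈ range n, ∑ j ∈ range n, A i j + ∑ j ∈ range n, (A n j + A j n) + A n n := by
  simp only [sum_range_succ, sum_add_distrib]
  abel

theorem sum_range_sum_range_sub_of_tridiagonal {F : ℤ → ℝ} (hF : ∀ d, 1 < |d| → F d = 0)
    (N : ℕ) : ∑ i ∈ range (N + 1), ∑ j ∈ range (N + 1), F (i - j) =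
      (N + 1) * F 0 + N * (F 1 + F (-1)) := by
  induction N with
  | zero => simp
  | succ N ih =>
    have hcross : ∑ j ∈ range (N + 1), (F ((N + 1 : ℕ) - j) + F (j - (N + 1 : ℕ))) =
        F 1 + F (-1) := by
      rw [sum_eq_single N]
      · push_cast
        ring_nf
      · intro j hj hjN
        rw [hF, hF, add_zero] <;> (simp only [mem_range] at hj; rw [lt_abs]; omega)
      · simp
    rw [sum_range_succ_sum_range_succ, ih, hcross]
    push_cast
    ring_nf

theorem pairPotential_not_decomposable {t : ℝ} (ht : t < -(√5 + 1) / 4) :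
    ¬ ∃ f g : ℤ → ℝ, (∀ n, 0 ≤ f n) ∧ IsPosDef g ∧ pairPotential t = f + g := by
  rintro ⟨f, g, hf, hg, hfg⟩
  have hgV (d : ℤ) : g d ≤ pairPotential t d := by
    rw [hfg, Pi.add_apply]
    linarith [hf d]
  have h5 : √5 ^ 2 = 5 := sq_sqrt (by norm_num)
  have hδ : 0 < -(4 * √5 * t + (5 + √5)) := by
    nlinarith [sqrt_pos.2 (by norm_num : (0 : ℝ) < 5)]
  obtain ⟨N, hN⟩ := exists_nat_gt ((5 + √5) / -(4 * √5 * t + (5 + √5)))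
  rw [div_lt_iff₀ hδ] at hN
  have hbound := calc
    0 ≤ ∑ i ∈ range (N + 1), ∑ j ∈ range (N + 1), pentagonWeight (i - j) * g (i - j) := by
        simpa [pentagonWeight] using hg.sum_range_add_cos_mul_nonneg (N + 1)
          (by positivity : 0 ≤ 1 + √5) (by norm_num : (0 : ℝ) ≤ 4) (2 * π / 5)
    _ ≤ ∑ i ∈ range (N + 1), ∑ j ∈ range (N + 1),
          pentagonWeight (i - j) * pairPotential t (i - j) :=
        sum_le_sum fun i _ => sum_le_sum fun j _ =>
          mul_le_mul_of_nonneg_left (hgV _) (pentagonWeight_nonneg _)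
    _ = (N + 1) * (5 + √5) + N * (2 * √5 * t + 2 * √5 * t) := by
        rw [sum_range_sum_range_sub_of_tridiagonal (F := fun d => pentagonWeight d * pairPotential t d)
          fun d => pentagonWeight_mul_pairPotential_eq_zero t]
        simp [pentagonWeight_zero, pentagonWeight_one, pentagonWeight_neg, pairPotential]
  linarith

theorem Vt_stable_not_decomposable (t : ℝ) (ht₁ : -1 ≤ t)
    (ht₂ : t < -(Real.sqrt 5 + 1) / 4)
    (Vt : ℤ → ℝ)
    (hVt : Vt = fun n =>
      if n = 0 ∨ n = 2 ∨ n = -2 then 1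
      else if n = 1 ∨ n = -1 then t
      else 0) :
    IsStable Vt ∧
      ¬ ∃ f g : ℤ → ℝ, (∀ n, 0 ≤ f n) ∧ IsPosDef g ∧ Vt = f + g := by
  subst hVt
  exact ⟨pairPotential_stable ht₁, pairPotential_not_decomposable ht₂⟩
end
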